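/- arXiv:2404.04464 — 6 statements merged into one kernel-verified Lean document; each statement's English description precedes it below -/
import Mathlib

section
/- Let (x_n)_{n∈I} be a frame for a separable Hilbert space H and let E ⊊ I be a finite subset. Then the closed linear span of {x_n : n ∈ I \ E} equals H if and only if (x_n)_{n∈I\E} is a frame for H. -/
noncomputable section

variable {H : Type*} [NormedAddCommGroup H] [InnerProductSpace ℂ H] [CompleteSpace H]

/-- `(x n)_{n ∈ I}` is a frame for `H` with frame bounds `A`, `B`. -/
def IsFrameOn (x : ℕ → H) (I : Set ℕ) (A B : ℝ) : Prop :=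
  0 < A ∧ 0 < B ∧ ∀ h : H,
    Summable (fun n : I => ‖(inner ℂ (x n) h : ℂ)‖ ^ 2) ∧
    A * ‖h‖ ^ 2 ≤ ∑' n : I, ‖(inner ℂ (x n) h : ℂ)‖ ^ 2 ∧
    ∑' n : I, ‖(inner ℂ (x n) h : ℂ)‖ ^ 2 ≤ B * ‖h‖ ^ 2

private def ff (x : ℕ → H) (h : H) (n : ℕ) : ℝ := ‖(inner ℂ (x n) h : ℂ)‖ ^ 2

private lemma ff_nonneg (x : ℕ → H) (h : H) (n : ℕ) : 0 ≤ ff x h n := sq_nonneg _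

private lemma ind_nonneg (x : ℕ → H) (s : Set ℕ) (h : H) (n : ℕ) :
    0 ≤ Set.indicator s (ff x h) n :=
  Set.indicator_apply_nonneg fun _ => ff_nonneg x h n

private lemma ff_sub_le (x : ℕ → H) (a b : H) (n : ℕ) :
    ff x (a - b) n ≤ 2 * ff x a n + 2 * ff x b n := by
  unfold ff
  rw [inner_sub_right]
  set u : ℂ := inner ℂ (x n) a
  set v : ℂ := inner ℂ (x n) b
  nlinarith [norm_sub_le u v, norm_nonneg u, norm_nonneg v, norm_nonneg (u - v),
    sq_nonneg (‖u‖ - ‖v‖)]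

set_option maxHeartbeats 1600000 in
/-- For a frame `(x n)_{n ∈ I}` of a separable Hilbert space `H` and a finite set
`E ⊊ I`, the closed linear span of `{x n : n ∈ I \ E}` is all of `H` if and only if
`(x n)_{n ∈ I \ E}` is a frame for `H`. -/
theorem stmt0 [TopologicalSpace.SeparableSpace H]
    (x : ℕ → H) (I : Set ℕ) (A B : ℝ) (hx : IsFrameOn x I A B)
    (E : Finset ℕ) (hE : (E : Set ℕ) ⊂ I) :
    Dense ((Submodule.span ℂ (x '' (I \ E)) : Submodule ℂ H) : Set H) ↔
      ∃ A' B' : ℝ, IsFrameOn x (I \ E) A' B' := by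
  classical
  obtain ⟨hA, hB, hfr⟩ := hx
  have hsumI : ∀ h : H, Summable (Set.indicator I (ff x h)) := fun h =>
    summable_subtype_iff_indicator.mp ((hfr h).1)
  have hsub : ∀ (s : Set ℕ), s ⊆ I → ∀ h : H, Summable (Set.indicator s (ff x h)) := by
    intro s hs h
    exact ((hsumI h).of_nonneg_of_le (ind_nonneg x s h)
      (fun n => Set.indicator_le_indicator_of_subset hs (fun m => ff_nonneg x h m) n))
  have hsumD : ∀ h : H, Summable (Set.indicator (I \ ↑E) (ff x h)) :=
    fun h => hsub _ Set.diff_subset h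
  have hsumIE : ∀ h : H, Summable (Set.indicator (I ∩ ↑E) (ff x h)) :=
    fun h => hsub _ Set.inter_subset_left h
  set S : H → ℝ := fun h => ∑' n, Set.indicator (I \ ↑E) (ff x h) n with hSdef
  have hSnonneg : ∀ h, 0 ≤ S h := fun h => tsum_nonneg (ind_nonneg x _ h)
  have htsub : ∀ h : H, (∑' n : ↑(I \ (↑E : Set ℕ)), ‖(inner ℂ (x n) h : ℂ)‖ ^ 2) = S h :=
    fun h => tsum_subtype _ (ff x h)
  have htI : ∀ h : H, (∑' n : I, ‖(inner ℂ (x n) h : ℂ)‖ ^ 2)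
      = ∑' n, Set.indicator I (ff x h) n := fun h => tsum_subtype _ (ff x h)
  have hsplit : ∀ h : H, (∑' n, Set.indicator I (ff x h) n)
      = S h + ∑' n, Set.indicator (I ∩ ↑E) (ff x h) n := by
    intro h
    rw [hSdef, ← Summable.tsum_add (hsumD h) (hsumIE h)]
    apply tsum_congr
    intro n
    by_cases h1 : n ∈ I <;> by_cases h2 : n ∈ (↑E : Set ℕ) <;>
      simp [Set.indicator_apply, h1, h2, Set.mem_diff, Set.mem_inter_iff]
  have hfin : ∀ h : H, (∑' n, Set.indicator (I ∩ ↑E) (ff x h) n) ≤ ∑ e ∈ E, ff x h e := by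
    intro h
    have h1 : Summable (Set.indicator (↑E : Set ℕ) (ff x h)) :=
      summable_of_ne_finset_zero (s := E)
        (fun n hn => Set.indicator_of_notMem (by simpa using hn) _)
    have h2 : (∑' n, Set.indicator (↑E : Set ℕ) (ff x h) n) = ∑ e ∈ E, ff x h e := by
      rw [← tsum_subtype]
      exact Finset.tsum_subtype E (ff x h)
    rw [← h2]
    exact Summable.tsum_le_tsum
      (fun n => Set.indicator_le_indicator_of_subset Set.inter_subset_right
        (fun m => ff_nonneg x h m) n) (hsumIE h) h1
  have hupper : ∀ h : H, S h ≤ B * ‖h‖ ^ 2 := by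
    intro h
    have hu := (hfr h).2.2
    rw [htI h] at hu
    refine le_trans ?_ hu
    exact Summable.tsum_le_tsum
      (fun n => Set.indicator_le_indicator_of_subset Set.diff_subset
        (fun m => ff_nonneg x h m) n) (hsumD h) (hsumI h)
  have hlowI : ∀ h : H, A * ‖h‖ ^ 2 ≤ S h + ∑ e ∈ E, ff x h e := by
    intro h
    have hl := (hfr h).2.1
    rw [htI h, hsplit h] at hl
    linarith [hfin h]
  have hterm : ∀ h : H, ∀ n ∈ I \ (↑E : Set ℕ), ff x h n ≤ S h := by
    intro h n hn
    have := Summable.le_tsum (hsumD h) n (fun j _ => ind_nonneg x _ h j)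
    rwa [Set.indicator_of_mem hn] at this
  constructor
  · -- forward direction
    intro hdense
    have hbot : (Submodule.span ℂ (x '' (I \ ↑E)))ᗮ = ⊥ :=
      Submodule.topologicalClosure_eq_top_iff.mp
        (Submodule.dense_iff_topologicalClosure_eq_top.mp hdense)
    have hperp : ∀ h : H, (∀ n ∈ I \ (↑E : Set ℕ), (inner ℂ (x n) h : ℂ) = 0) → h = 0 := by
      intro h hh
      have hmem : h ∈ (Submodule.span ℂ (x '' (I \ ↑E)))ᗮ := by
        rw [Submodule.mem_orthogonal]
        intro u hu
        induction hu using Submodule.span_induction with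
        | mem y hy => obtain ⟨n, hn, rfl⟩ := hy; exact hh n hn
        | zero => simp
        | add a b _ _ ha hb => rw [inner_add_left, ha, hb, add_zero]
        | smul c a _ ha => rw [inner_smul_left, ha, mul_zero]
      rw [hbot] at hmem
      simpa using hmem
    have key : ∃ A' : ℝ, 0 < A' ∧ ∀ h : H, A' * ‖h‖ ^ 2 ≤ S h := by
      by_contra hcon
      push_neg at hcon
      have hseq : ∀ k : ℕ, ∃ g : H, ‖g‖ = 1 ∧ S g < ((k : ℝ) + 1)⁻¹ := by
        intro k
        obtain ⟨h, hh⟩ := hcon (((k : ℝ) + 1)⁻¹) (by positivity)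
        have h0 : h ≠ 0 := by
          rintro rfl
          have hS0 : S (0 : H) = 0 := by
            have : ∀ n, Set.indicator (I \ (↑E : Set ℕ)) (ff x (0 : H)) n = 0 := by
              intro n
              by_cases hn : n ∈ I \ (↑E : Set ℕ)
              · rw [Set.indicator_of_mem hn]; simp [ff]
              · rw [Set.indicator_of_notMem hn]
            rw [hSdef]
            simp only [this, tsum_zero]
          rw [hS0] at hh
          simp at hh
        have hnpos : (0 : ℝ) < ‖h‖ := norm_pos_iff.mpr h0
        refine ⟨((‖h‖ : ℂ))⁻¹ • h, ?_, ?_⟩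
        · rw [norm_smul, norm_inv, Complex.norm_real, norm_norm, inv_mul_cancel₀ hnpos.ne']
        · have hscale : S (((‖h‖ : ℂ))⁻¹ • h) = (‖h‖ ^ 2)⁻¹ * S h := by
            have hpt : ∀ n, Set.indicator (I \ (↑E : Set ℕ)) (ff x (((‖h‖ : ℂ))⁻¹ • h)) n
                = (‖h‖ ^ 2)⁻¹ * Set.indicator (I \ (↑E : Set ℕ)) (ff x h) n := by
              intro n
              by_cases hn : n ∈ I \ (↑E : Set ℕ)
              · rw [Set.indicator_of_mem hn, Set.indicator_of_mem hn]
                unfold ff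
                rw [inner_smul_right, norm_mul, norm_inv, Complex.norm_real, norm_norm,
                  mul_pow]
                ring
              · rw [Set.indicator_of_notMem hn, Set.indicator_of_notMem hn, mul_zero]
            rw [hSdef]
            simp only [hpt]
            exact tsum_mul_left
          rw [hscale]
          calc (‖h‖ ^ 2)⁻¹ * S h < (‖h‖ ^ 2)⁻¹ * (((k : ℝ) + 1)⁻¹ * ‖h‖ ^ 2) := by
                apply mul_lt_mul_of_pos_left hh (by positivity)
            _ = ((k : ℝ) + 1)⁻¹ := by field_simp
      choose g hg1 hg2 using hseq
      set F : ℕ → (↥E → ℂ) := fun k e => (inner ℂ (x e) (g k) : ℂ) with hFdef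
      set C : ℝ := (∑ e ∈ E, ‖x e‖) + 1 with hCdef
      have hCnn : 0 ≤ C := by
        have : (0:ℝ) ≤ ∑ e ∈ E, ‖x e‖ := Finset.sum_nonneg fun e _ => norm_nonneg _
        linarith
      have hFmem : ∀ k, F k ∈ Metric.closedBall (0 : ↥E → ℂ) C := by
        intro k
        rw [Metric.mem_closedBall, dist_zero_right]
        rw [pi_norm_le_iff_of_nonneg hCnn]
        intro e
        calc ‖F k e‖ ≤ ‖x ↑e‖ * ‖g k‖ := norm_inner_le_norm _ _
          _ = ‖x ↑e‖ := by rw [hg1, mul_one]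
          _ ≤ ∑ e' ∈ E, ‖x e'‖ :=
              Finset.single_le_sum (fun i _ => norm_nonneg (x i)) e.2
          _ ≤ C := by rw [hCdef]; linarith
      obtain ⟨L, -, φ, hφ, hFL⟩ := (isCompact_closedBall (0 : ↥E → ℂ) C).tendsto_subseq hFmem
      -- core estimate
      have hest : ∀ j l : ℕ, A * ‖g (φ j) - g (φ l)‖ ^ 2 ≤
          2 * ((φ j : ℝ) + 1)⁻¹ + 2 * ((φ l : ℝ) + 1)⁻¹
            + (E.card : ℝ) * dist (F (φ j)) (F (φ l)) ^ 2 := by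
        intro j l
        set d : H := g (φ j) - g (φ l) with hddef
        have h2 : S d ≤ 2 * S (g (φ j)) + 2 * S (g (φ l)) := by
          have hpt : ∀ n, Set.indicator (I \ (↑E : Set ℕ)) (ff x d) n ≤
              2 * Set.indicator (I \ (↑E : Set ℕ)) (ff x (g (φ j))) n
                + 2 * Set.indicator (I \ (↑E : Set ℕ)) (ff x (g (φ l))) n := by
            intro n
            by_cases hn : n ∈ I \ (↑E : Set ℕ)
            · simp only [Set.indicator_of_mem hn]
              exact ff_sub_le x _ _ n
            · simp only [Set.indicator_of_notMem hn, mul_zero, add_zero, le_refl]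
          calc S d ≤ ∑' n, (2 * Set.indicator (I \ (↑E : Set ℕ)) (ff x (g (φ j))) n
                + 2 * Set.indicator (I \ (↑E : Set ℕ)) (ff x (g (φ l))) n) :=
              Summable.tsum_le_tsum hpt (hsumD d)
                (((hsumD _).mul_left 2).add ((hsumD _).mul_left 2))
            _ = 2 * S (g (φ j)) + 2 * S (g (φ l)) := by
              rw [Summable.tsum_add ((hsumD _).mul_left 2) ((hsumD _).mul_left 2),
                tsum_mul_left, tsum_mul_left]
        have h3 : (∑ e ∈ E, ff x d e) ≤ (E.card : ℝ) * dist (F (φ j)) (F (φ l)) ^ 2 := by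
          rw [← Finset.sum_attach E (fun e => ff x d e)]
          have hb : ∀ e ∈ E.attach, ff x d ↑e ≤ dist (F (φ j)) (F (φ l)) ^ 2 := by
            intro e _
            have h1 : ff x d ↑e = ‖F (φ j) e - F (φ l) e‖ ^ 2 := by
              unfold ff
              rw [hddef, inner_sub_right]
            rw [h1]
            have h2' : ‖F (φ j) e - F (φ l) e‖ ≤ dist (F (φ j)) (F (φ l)) := by
              rw [dist_eq_norm]
              simpa using norm_le_pi_norm (F (φ j) - F (φ l)) e
            nlinarith [norm_nonneg (F (φ j) e - F (φ l) e),
              dist_nonneg (x := F (φ j)) (y := F (φ l))]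
          calc ∑ e ∈ E.attach, ff x d ↑e
              ≤ E.attach.card • (dist (F (φ j)) (F (φ l)) ^ 2) :=
                Finset.sum_le_card_nsmul _ _ _ hb
            _ = (E.card : ℝ) * dist (F (φ j)) (F (φ l)) ^ 2 := by
                rw [Finset.card_attach, nsmul_eq_mul]
        have h4 := hlowI d
        have h5 := hg2 (φ j)
        have h6 := hg2 (φ l)
        have h7 : S (g (φ j)) < ((φ j : ℝ) + 1)⁻¹ := h5
        linarith
      have hGC : CauchySeq (g ∘ φ) := by
        rw [Metric.cauchySeq_iff]
        intro ε hε
        have hAε : 0 < A * ε ^ 2 := by positivity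
        obtain ⟨N₁, hN₁⟩ := exists_nat_gt (8 / (A * ε ^ 2))
        have hN₁pos : (0 : ℝ) < (N₁ : ℝ) + 1 := by positivity
        rw [div_lt_iff₀ hAε] at hN₁
        have htail : (4 : ℝ) * ((N₁ : ℝ) + 1)⁻¹ < A * ε ^ 2 / 2 := by
          rw [show ((N₁ : ℝ) + 1)⁻¹ = 1 / ((N₁ : ℝ) + 1) from (one_div _).symm,
            mul_one_div, div_lt_div_iff₀ hN₁pos two_pos]
          nlinarith [hAε]
        set c : ℝ := (E.card : ℝ) with hcdef
        have hc : 0 ≤ c := Nat.cast_nonneg _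
        set δ : ℝ := min 1 (A * ε ^ 2 / (2 * (c + 1))) with hδdef
        have hδpos : 0 < δ := lt_min one_pos (div_pos hAε (by linarith))
        obtain ⟨N₂, hN₂⟩ := Metric.cauchySeq_iff.mp hFL.cauchySeq δ hδpos
        refine ⟨max N₁ N₂, fun j hj l hl => ?_⟩
        have hdist : dist (F (φ j)) (F (φ l)) < δ :=
          hN₂ j (le_of_max_le_right hj) l (le_of_max_le_right hl)
        have hφj : ((φ j : ℝ) + 1)⁻¹ ≤ ((N₁ : ℝ) + 1)⁻¹ := by
          apply inv_anti₀ hN₁pos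
          have : N₁ ≤ φ j := (le_of_max_le_left hj).trans hφ.le_apply
          exact_mod_cast Nat.add_le_add_right this 1
        have hφl : ((φ l : ℝ) + 1)⁻¹ ≤ ((N₁ : ℝ) + 1)⁻¹ := by
          apply inv_anti₀ hN₁pos
          have : N₁ ≤ φ l := (le_of_max_le_left hl).trans hφ.le_apply
          exact_mod_cast Nat.add_le_add_right this 1
        have he := hest j l
        have hcd : c * dist (F (φ j)) (F (φ l)) ^ 2 < A * ε ^ 2 / 2 := by
          have hd0 : (0 : ℝ) ≤ dist (F (φ j)) (F (φ l)) := dist_nonneg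
          have h1' : dist (F (φ j)) (F (φ l)) ^ 2 ≤ δ ^ 2 := by nlinarith
          have hδ1 : δ ≤ 1 := min_le_left _ _
          have hδ2 : δ ≤ A * ε ^ 2 / (2 * (c + 1)) := min_le_right _ _
          have hδδ : δ ^ 2 ≤ δ := by nlinarith [hδpos, hδ1]
          have h2' : c * δ ^ 2 ≤ c * δ := mul_le_mul_of_nonneg_left hδδ hc
          have h3' : c * δ ≤ c * (A * ε ^ 2 / (2 * (c + 1))) :=
            mul_le_mul_of_nonneg_left hδ2 hc
          have h4' : c * (A * ε ^ 2 / (2 * (c + 1))) < A * ε ^ 2 / 2 := by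
            rw [mul_div_assoc', div_lt_div_iff₀ (by linarith) two_pos]
            nlinarith [hAε]
          have h5' : c * dist (F (φ j)) (F (φ l)) ^ 2 ≤ c * δ ^ 2 :=
            mul_le_mul_of_nonneg_left h1' hc
          linarith
        have hd2 : ‖g (φ j) - g (φ l)‖ ^ 2 < ε ^ 2 := by
          have hAbd : A * ‖g (φ j) - g (φ l)‖ ^ 2 < A * ε ^ 2 := by
            calc A * ‖g (φ j) - g (φ l)‖ ^ 2
                ≤ 2 * ((φ j : ℝ) + 1)⁻¹ + 2 * ((φ l : ℝ) + 1)⁻¹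
                  + c * dist (F (φ j)) (F (φ l)) ^ 2 := he
              _ < A * ε ^ 2 / 2 + A * ε ^ 2 / 2 := by linarith
              _ = A * ε ^ 2 := by ring
          exact lt_of_mul_lt_mul_left hAbd hA.le
        show dist (g (φ j)) (g (φ l)) < ε
        rw [dist_eq_norm]
        exact lt_of_pow_lt_pow_left₀ 2 hε.le hd2
      obtain ⟨hoo, hlim⟩ := cauchySeq_tendsto_of_complete hGC
      have hnorm1 : ‖hoo‖ = 1 := by
        have h1 : Filter.Tendsto (fun k => ‖(g ∘ φ) k‖) Filter.atTop (nhds ‖hoo‖) := hlim.norm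
        have h2 : (fun k => ‖(g ∘ φ) k‖) = fun _ => (1 : ℝ) := funext fun k => hg1 (φ k)
        rw [h2] at h1
        exact tendsto_nhds_unique h1 tendsto_const_nhds
      have hzero : ∀ n ∈ I \ (↑E : Set ℕ), (inner ℂ (x n) hoo : ℂ) = 0 := by
        intro n hn
        have hten : Filter.Tendsto (fun k => ‖(inner ℂ (x n) ((g ∘ φ) k) : ℂ)‖ ^ 2)
            Filter.atTop (nhds (‖(inner ℂ (x n) hoo : ℂ)‖ ^ 2)) :=
          (Filter.Tendsto.inner tendsto_const_nhds hlim).norm.pow 2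
        have hφt : Filter.Tendsto (fun k => ((φ k : ℝ) + 1)) Filter.atTop Filter.atTop :=
          Filter.tendsto_atTop_add_const_right _ 1
            (tendsto_natCast_atTop_atTop.comp hφ.tendsto_atTop)
        have hinv0 : Filter.Tendsto (fun k => ((φ k : ℝ) + 1)⁻¹) Filter.atTop (nhds 0) :=
          tendsto_inv_atTop_zero.comp hφt
        have hbnd : Filter.Tendsto (fun k => ‖(inner ℂ (x n) ((g ∘ φ) k) : ℂ)‖ ^ 2)
            Filter.atTop (nhds 0) := by
          refine squeeze_zero (fun k => sq_nonneg _) (fun k => ?_) hinv0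
          exact le_of_lt (lt_of_le_of_lt (hterm (g (φ k)) n hn) (hg2 (φ k)))
        have h0 : ‖(inner ℂ (x n) hoo : ℂ)‖ ^ 2 = 0 := tendsto_nhds_unique hten hbnd
        have := pow_eq_zero_iff (n := 2) (by norm_num) |>.mp h0
        exact norm_eq_zero.mp this
      have hcontr : hoo = 0 := hperp hoo hzero
      rw [hcontr] at hnorm1
      simp at hnorm1
    obtain ⟨A', hA', hlow'⟩ := key
    refine ⟨A', B, hA', hB, fun h => ⟨summable_subtype_iff_indicator.mpr (hsumD h), ?_, ?_⟩⟩
    · rw [htsub h]; exact hlow' h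
    · rw [htsub h]; exact hupper h
  · -- backward direction
    rintro ⟨A', B', hA', hB', hfr'⟩
    rw [Submodule.dense_iff_topologicalClosure_eq_top, Submodule.topologicalClosure_eq_top_iff,
      Submodule.eq_bot_iff]
    intro h hh
    have hz : ∀ n ∈ I \ (↑E : Set ℕ), (inner ℂ (x n) h : ℂ) = 0 := by
      intro n hn
      exact (Submodule.mem_orthogonal _ h).mp hh _ (Submodule.subset_span ⟨n, hn, rfl⟩)
    have hS0 : (∑' n : ↑(I \ (↑E : Set ℕ)), ‖(inner ℂ (x n) h : ℂ)‖ ^ 2) = 0 := by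
      have hz' : ∀ n : ↑(I \ (↑E : Set ℕ)), ‖(inner ℂ (x (↑n)) h : ℂ)‖ ^ 2 = 0 := by
        intro n
        rw [hz n n.2]
        simp
      rw [tsum_congr hz', tsum_zero]
    have hl := (hfr' h).2.1
    rw [hS0] at hl
    have ht : ‖h‖ ^ 2 ≤ 0 := by nlinarith [hA', sq_nonneg ‖h‖]
    have ht2 : ‖h‖ ^ 2 = 0 := le_antisymm ht (sq_nonneg _)
    have ht3 := pow_eq_zero_iff (n := 2) (by norm_num) |>.mp ht2
    exact norm_eq_zero.mp ht3

end
end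

section
/- Let (x_n)_{n∈I} be a frame for H, (y_n)_{n∈I} its canonical dual, and E = {1,...,k} ⊊ I a finite set satisfying the MRC for (x_n). Then the operator T = I − Σ_{i=1}^k θ_{y_i, x_i} (where θ_{y,x}h = ⟨h,x⟩y) is invertible on H, and the sequence v_n = T⁻¹ y_n, n ∈ E^c, is the canonical dual frame of the reduced frame (x_n)_{n∈E^c}. -/
/-!
Since `S θ_{y,x} = θ_{S y, x}` and `S y_i = x_i`, the frame operator factors the reduced frame
operator as `S_E = S T`. The MRC makes `S_E`, hence `T`, injective; as `T` is the identity minus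
a finite-rank (so compact) operator, the Fredholm alternative makes it invertible. Then
`S_E⁻¹ = T⁻¹ S⁻¹` sends `x_n` to `T⁻¹ y_n`.
-/

noncomputable section

variable {H : Type*} [NormedAddCommGroup H] [InnerProductSpace ℂ H] [CompleteSpace H]

/-- `(y n)_{n ∈ I}` is the canonical dual of `(x n)_{n ∈ I}`, i.e. `y n = S⁻¹ (x n)`
where `S` is the frame operator of `(x n)_{n ∈ I}`. -/
def IsCanonicalDualOn (y x : ℕ → H) (I : Set ℕ) : Prop :=
  ∃ S Sinv : H →L[ℂ] H,
    (∀ h : H, HasSum (fun n : I => (inner ℂ (x n) h : ℂ) • x n) (S h)) ∧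
    Sinv.comp S = ContinuousLinearMap.id ℂ H ∧
    S.comp Sinv = ContinuousLinearMap.id ℂ H ∧
    ∀ n ∈ I, y n = Sinv (x n)

/-- The rank-one operator `θ_{y,x} : h ↦ ⟨h, x⟩ y`. -/
def rankOne (y x : H) : H →L[ℂ] H := (innerSL ℂ x).smulRight y

theorem IsCompactOperator.isUnit_one_sub {𝕜 X : Type*} [NontriviallyNormedField 𝕜]
    [NormedAddCommGroup X] [NormedSpace 𝕜 X] [CompleteSpace X] {T : X →L[𝕜] X}
    (hT : IsCompactOperator T) (hinj : Function.Injective (1 - T : X →L[𝕜] X)) :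
    IsUnit (1 - T) := by
  have hnot : ¬ Module.End.HasEigenvalue (T : Module.End 𝕜 X) 1 := fun h => by
    obtain ⟨v, hv⟩ := h.exists_hasEigenvector
    have hTv : T v = v := by simpa using hv.apply_eq_smul
    exact hv.2 (hinj (by simp [hTv]))
  simpa [spectrum.mem_resolventSet_iff] using
    (hT.hasEigenvalue_or_mem_resolventSet one_ne_zero).resolve_left hnot

theorem HasSum.subtype_sdiff_finset {α β : Type*} [AddCommGroup α] [TopologicalSpace α]
    [IsTopologicalAddGroup α] {f : β → α} {I : Set β} {s : Finset β} {a : α} (hs : ↑s ⊆ I)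
    (hf : HasSum (fun n : I => f n) a) :
    HasSum (fun n : ↥(I \ s) => f n) (a - ∑ i ∈ s, f i) := by
  refine hasSum_subtype_iff_indicator.2 ?_
  rw [Set.indicator_sdiff hs]
  exact (hasSum_subtype_iff_indicator.1 hf).sub (hasSum_subtype_iff_indicator.1 (s.hasSum f))

section InnerProductSpace

variable {𝕜 X ι : Type*} [RCLike 𝕜] [NormedAddCommGroup X] [InnerProductSpace 𝕜 X]

theorem inner_eq_zero_of_hasSum_inner_smul_eq_zero {x : ι → X} {h : X}
    (hsum : HasSum (fun n => inner 𝕜 (x n) h • x n) 0) (n : ι) : inner 𝕜 (x n) h = 0 := by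
  have hsq : HasSum (fun n => ‖inner 𝕜 (x n) h‖ ^ 2) 0 := by
    have hinner : ∀ n, inner 𝕜 h (inner 𝕜 (x n) h • x n) = ((‖inner 𝕜 (x n) h‖ ^ 2 : ℝ) : 𝕜) := by
      intro n
      rw [inner_smul_right, ← inner_conj_symm h, RCLike.mul_conj, RCLike.ofReal_pow]
    have := hsum.mapL (innerSL 𝕜 h)
    rw [map_zero, ← RCLike.ofReal_zero (K := 𝕜)] at this
    simp only [innerSL_apply_apply, hinner] at this
    exact (RCLike.hasSum_ofReal 𝕜).1 this
  simpa using congrFun ((hasSum_zero_iff_of_nonneg fun n => by positivity).1 hsq) n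

theorem eq_zero_of_hasSum_inner_smul_eq_zero {x : ι → X} {J : Set ι}
    (hJ : Dense (Submodule.span 𝕜 (x '' J) : Set X)) {h : X}
    (hsum : HasSum (fun n : J => inner 𝕜 (x n) h • x n) 0) : h = 0 := by
  have hspan : Submodule.span 𝕜 (x '' J) ≤ LinearMap.ker (innerSL 𝕜 h : X →ₗ[𝕜] 𝕜) := by
    rw [Submodule.span_le]
    rintro _ ⟨n, hn, rfl⟩
    exact inner_eq_zero_symm.1 (inner_eq_zero_of_hasSum_inner_smul_eq_zero hsum ⟨n, hn⟩)
  exact hJ.eq_zero_of_inner_left 𝕜 fun v hv => hspan hv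

end InnerProductSpace

section RankOne

variable {V : Type*} [NormedAddCommGroup V] [InnerProductSpace ℂ V]

theorem rankOne_apply (y x h : V) : rankOne y x h = inner ℂ x h • y := rfl

theorem isCompactOperator_rankOne (y x : V) : IsCompactOperator (rankOne y x) :=
  (isCompactOperator_of_locallyCompactSpace_dom (innerSL ℂ x)).clm_comp
    ((ContinuousLinearMap.id ℂ ℂ).smulRight y)

theorem isCompactOperator_sum_rankOne {ι : Type*} (s : Finset ι) (y x : ι → V) :
    IsCompactOperator (∑ i ∈ s, rankOne (y i) (x i) : V →L[ℂ] V) :=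
  (compactOperator (RingHom.id ℂ) V V).sum_mem fun i _ => isCompactOperator_rankOne (y i) (x i)

theorem ContinuousLinearMap.comp_rankOne (S : V →L[ℂ] V) (y x : V) :
    S.comp (rankOne y x) = rankOne (S y) x := by
  ext h
  simp [rankOne_apply]

end RankOne

theorem stmt4_general (x y : ℕ → H) (I : Set ℕ)
    (hy : IsCanonicalDualOn y x I) (k : ℕ)
    (hE : ((Finset.Icc 1 k : Finset ℕ) : Set ℕ) ⊂ I)
    (hMRC : Dense ((Submodule.span ℂ
      (x '' (I \ (Finset.Icc 1 k : Finset ℕ))) : Submodule ℂ H) : Set H)) :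
    ∃ Tinv : H →L[ℂ] H,
      Tinv.comp (ContinuousLinearMap.id ℂ H - ∑ i ∈ Finset.Icc 1 k, rankOne (y i) (x i)) =
        ContinuousLinearMap.id ℂ H ∧
      (ContinuousLinearMap.id ℂ H - ∑ i ∈ Finset.Icc 1 k, rankOne (y i) (x i)).comp Tinv =
        ContinuousLinearMap.id ℂ H ∧
      IsCanonicalDualOn (fun n => Tinv (y n)) x (I \ (Finset.Icc 1 k : Finset ℕ)) := by
  obtain ⟨S, Sinv, hS, hSinvS, hSSinv, hyx⟩ := hy
  set E : Finset ℕ := Finset.Icc 1 k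
  set T := ContinuousLinearMap.id ℂ H - ∑ i ∈ E, rankOne (y i) (x i)
  set SE := S - ∑ i ∈ E, rankOne (x i) (x i)
  have hSE (h : H) : HasSum (fun n : ↥(I \ E) => inner ℂ (x n) h • x n) (SE h) := by
    simpa [SE, rankOne_apply] using (hS h).subtype_sdiff_finset hE.subset
  have hST : S.comp T = SE := by
    have hSy (i : ℕ) (hi : i ∈ E) : S (y i) = x i := by
      rw [hyx i (hE.subset hi)]
      exact ContinuousLinearMap.ext_iff.1 hSSinv (x i)
    simp only [T, SE, ContinuousLinearMap.comp_sub, ContinuousLinearMap.comp_id,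
      ContinuousLinearMap.comp_finsetSum, ContinuousLinearMap.comp_rankOne]
    exact congrArg (S - ·) (Finset.sum_congr rfl fun i hi => by rw [hSy i hi])
  have hTinj : Function.Injective T := by
    refine (injective_iff_map_eq_zero T).2 fun h hTh => ?_
    refine eq_zero_of_hasSum_inner_smul_eq_zero hMRC ?_
    simpa [← hST, hTh] using hSE h
  obtain ⟨Tu, hTu : (Tu : H →L[ℂ] H) = T⟩ :=
    (isCompactOperator_sum_rankOne E y x).isUnit_one_sub hTinj
  -- `S_E = S T` is a product of units, so its inverse is `T⁻¹ S⁻¹`.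
  let Su : (H →L[ℂ] H)ˣ := ⟨S, Sinv, hSSinv, hSinvS⟩
  have hSTu : ((Su * Tu : (H →L[ℂ] H)ˣ) : H →L[ℂ] H) = SE := by
    rw [Units.val_mul, hTu]
    exact hST
  refine ⟨↑Tu⁻¹, hTu ▸ Tu.inv_mul, hTu ▸ Tu.mul_inv, SE, ↑(Su * Tu)⁻¹, hSE,
    hSTu ▸ (Su * Tu).inv_mul, hSTu ▸ (Su * Tu).mul_inv, fun n hn => ?_⟩
  rw [mul_inv_rev, Units.val_mul]
  exact congrArg _ (hyx n hn.1)

/-- If `(y n)` is the canonical dual of the frame `(x n)_{n ∈ I}` and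
`E = {1,…,k} ⊊ I` satisfies the MRC, then `T = I − Σ_{i=1}^k θ_{y i, x i}` is
invertible and `(T⁻¹ y n)_{n ∈ I \ E}` is the canonical dual of `(x n)_{n ∈ I \ E}`. -/
theorem stmt4 (x y : ℕ → H) (I : Set ℕ) (A B : ℝ) (hx : IsFrameOn x I A B)
    (hy : IsCanonicalDualOn y x I) (k : ℕ)
    (hE : ((Finset.Icc 1 k : Finset ℕ) : Set ℕ) ⊂ I)
    (hMRC : Dense ((Submodule.span ℂ
      (x '' (I \ (Finset.Icc 1 k : Finset ℕ))) : Submodule ℂ H) : Set H)) :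
    ∃ Tinv : H →L[ℂ] H,
      Tinv.comp (ContinuousLinearMap.id ℂ H - ∑ i ∈ Finset.Icc 1 k, rankOne (y i) (x i)) =
        ContinuousLinearMap.id ℂ H ∧
      (ContinuousLinearMap.id ℂ H - ∑ i ∈ Finset.Icc 1 k, rankOne (y i) (x i)).comp Tinv =
        ContinuousLinearMap.id ℂ H ∧
      IsCanonicalDualOn (fun n => Tinv (y n)) x (I \ (Finset.Icc 1 k : Finset ℕ)) :=
  stmt4_general x y I hy k hE hMRC

end
end

section
/- Let (x_n)_{n∈I} be a frame for H with canonical dual (y_n), and E = {1,...,k} a finite set satisfying the MRC. For each n ∈ E^c define the column vector (α_{n1},...,α_{nk})^T = (G − I)⁻¹ (⟨y_n,x_1⟩,...,⟨y_n,x_k⟩)^T, where G is the k×k matrix with entries G_{mi} = ⟨y_i, x_m⟩. Then v_n = y_n − Σ_{i=1}^k α_{ni} y_i, for n ∈ E^c, is the canonical dual frame of (x_n)_{n∈E^c}. -/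
noncomputable section

variable {H : Type*} [NormedAddCommGroup H] [InnerProductSpace ℂ H] [CompleteSpace H]

/-! Deleting `x 1, …, x k` turns the frame operator `S` into `S - T = S (1 - K)`, where
`T h = ∑ ⟪x i, h⟫ x i` and `K h = ∑ ⟪x i, h⟫ y i` (because `S y i = x i`). Since
`⟪h, (S - T) h⟫ = ∑_{n ∉ E} |⟪x n, h⟫|²`, the MRC makes `S - T`, hence `1 - K`, injective; a
vector `a` with `G a = a` would give the fixed point `∑ a i y i` of `K`, so `G - 1` is
invertible. The Sherman–Morrison–Woodbury identity then inverts `1 - K` as `1 - L` with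
`L h = ∑ ((G - 1)⁻¹ (⟪x m, h⟫)ₘ) i • y i`, and the new canonical dual is
`(1 - L) S⁻¹ x n = (1 - L) y n = y n - ∑ α n i • y i`. -/

theorem Finset.sum_Icc_one_eq_sum_fin {M : Type*} [AddCommMonoid M] (k : ℕ) (f : ℕ → M) :
    ∑ n ∈ Icc 1 k, f n = ∑ i : Fin k, f ((i : ℕ) + 1) := by
  rw [Fin.sum_univ_eq_sum_range (fun i => f (i + 1)), range_eq_Ico, sum_Ico_add' f 0 k 1,
    zero_add, Ico_add_one_right_eq_Icc]

section FiniteRank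

open scoped Matrix

variable {𝕜 V W ι : Type*} [NormedField 𝕜] [NormedAddCommGroup V] [NormedSpace 𝕜 V]
  [NormedAddCommGroup W] [NormedSpace 𝕜 W]

def pairingMatrix (φ : ι → V →L[𝕜] 𝕜) (w : ι → V) : Matrix ι ι 𝕜 :=
  Matrix.of fun m i => φ m (w i)

variable [Fintype ι]

def finiteRankOp (φ : ι → V →L[𝕜] 𝕜) (w : ι → W) : V →L[𝕜] W :=
  ∑ i, (φ i).smulRight (w i)

theorem finiteRankOp_apply (φ : ι → V →L[𝕜] 𝕜) (w : ι → W) (h : V) :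
    finiteRankOp φ w h = Fintype.linearCombination 𝕜 w (fun i => φ i h) := by
  simp [finiteRankOp, Fintype.linearCombination_apply]

theorem comp_finiteRankOp (T : W →L[𝕜] W) (φ : ι → V →L[𝕜] 𝕜) (w : ι → W) :
    T ∘L finiteRankOp φ w = finiteRankOp φ (T ∘ w) := by
  ext h
  simp [finiteRankOp_apply, Fintype.linearCombination_apply]

theorem apply_linearCombination (φ : ι → V →L[𝕜] 𝕜) (w : ι → V) (a : ι → 𝕜) :
    (fun m => φ m (Fintype.linearCombination 𝕜 w a)) = pairingMatrix φ w *ᵥ a := by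
  ext m
  simp [Fintype.linearCombination_apply, pairingMatrix, Matrix.mulVec, dotProduct, mul_comm]

theorem sum_smul_apply_eq_mulVec (M : Matrix ι ι 𝕜) (φ : ι → V →L[𝕜] 𝕜) (h : V) :
    (fun i => (∑ m, M i m • φ m) h) = M *ᵥ fun m => φ m h := by
  ext i
  simp [Matrix.mulVec, dotProduct]

variable [DecidableEq ι]

theorem isUnit_det_pairingMatrix_sub_one (φ : ι → V →L[𝕜] 𝕜) (w : ι → V)
    (hK : Function.Injective ⇑(1 - finiteRankOp φ w : V →L[𝕜] V)) :
    IsUnit (pairingMatrix φ w - 1).det := by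
  rw [isUnit_iff_ne_zero, Ne, ← Matrix.exists_mulVec_eq_zero_iff]
  rintro ⟨a, ha0, ha⟩
  set g := Fintype.linearCombination 𝕜 w a
  have hcoeff : (fun m => φ m g) = a := by
    rw [apply_linearCombination, ← sub_eq_zero, ← ha, Matrix.sub_mulVec, Matrix.one_mulVec]
  have hKg : finiteRankOp φ w g = g := by rw [finiteRankOp_apply, hcoeff]
  have hg : g = 0 := hK (by simp [hKg])
  exact ha0 (by rw [← hcoeff, hg]; simp only [map_zero]; rfl)

theorem one_sub_finiteRankOp_mul_one_sub_finiteRankOp (φ : ι → V →L[𝕜] 𝕜) (w : ι → V)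
    {M : Matrix ι ι 𝕜} (hM : (pairingMatrix φ w - 1) * M = 1) :
    (1 - finiteRankOp φ w) * (1 - finiteRankOp (fun i => ∑ m, M i m • φ m) w) =
      (1 : V →L[𝕜] V) := by
  ext h
  simp only [mul_apply_eq_comp, sub_apply, one_apply_eq_self, finiteRankOp_apply,
    sum_smul_apply_eq_mulVec, map_sub, apply_linearCombination]
  set c := fun m => φ m h
  have hc : c + (M *ᵥ c - pairingMatrix φ w *ᵥ M *ᵥ c) = 0 := by
    nth_rewrite 1 [← Matrix.one_mulVec c]
    rw [← hM, ← Matrix.mulVec_mulVec, Matrix.sub_mulVec, Matrix.one_mulVec]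
    abel
  rw [sub_sub, ← map_sub, ← map_add, hc, map_zero, sub_zero]

theorem one_sub_finiteRankOp_mul_one_sub_finiteRankOp' (φ : ι → V →L[𝕜] 𝕜) (w : ι → V)
    {M : Matrix ι ι 𝕜} (hM : M * (pairingMatrix φ w - 1) = 1) :
    (1 - finiteRankOp (fun i => ∑ m, M i m • φ m) w) * (1 - finiteRankOp φ w) =
      (1 : V →L[𝕜] V) := by
  ext h
  simp only [mul_apply_eq_comp, sub_apply, one_apply_eq_self, finiteRankOp_apply,
    sum_smul_apply_eq_mulVec, map_sub, apply_linearCombination]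
  set c := fun m => φ m h
  have hc : M *ᵥ c + (c - M *ᵥ pairingMatrix φ w *ᵥ c) = 0 := by
    nth_rewrite 2 [← Matrix.one_mulVec c]
    rw [← hM, ← Matrix.mulVec_mulVec, Matrix.sub_mulVec, Matrix.one_mulVec, Matrix.mulVec_sub]
    abel
  rw [sub_sub, ← map_sub, ← map_add, hc, map_zero, sub_zero]

end FiniteRank

section FrameOperator

variable {𝕜 V β : Type*} [RCLike 𝕜] [NormedAddCommGroup V] [InnerProductSpace 𝕜 V]

def IsFrameOperatorOn (x : β → V) (J : Set β) (S : V →L[𝕜] V) : Prop :=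
  ∀ h : V, HasSum (fun n : J => inner 𝕜 (x n) h • x n) (S h)

theorem hasSum_sdiff_finset {M : Type*} [AddCommGroup M] [TopologicalSpace M]
    [IsTopologicalAddGroup M] {f : β → M} {J : Set β} {s : M} (hf : HasSum (fun n : J => f n) s)
    {E : Finset β} (hE : (E : Set β) ⊆ J) :
    HasSum (fun n : ↥(J \ E) => f n) (s - ∑ n ∈ E, f n) := by
  refine hasSum_subtype_iff_indicator.2 ?_
  rw [Set.indicator_sdiff hE]
  exact (hasSum_subtype_iff_indicator.mp hf).sub (hasSum_subtype_iff_indicator.mp (E.hasSum f))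

theorem IsFrameOperatorOn.sdiff_finset {x : β → V} {J : Set β} {S : V →L[𝕜] V}
    (hS : IsFrameOperatorOn x J S) {E : Finset β} (hE : (E : Set β) ⊆ J) :
    IsFrameOperatorOn x (J \ E) (S - ∑ n ∈ E, (innerSL 𝕜 (x n)).smulRight (x n)) := fun h => by
  simpa using hasSum_sdiff_finset (hS h) hE

theorem IsFrameOperatorOn.injective {x : β → V} {J : Set β} {S : V →L[𝕜] V}
    (hS : IsFrameOperatorOn x J S) (hx : Dense (Submodule.span 𝕜 (x '' J) : Set V)) :
    Function.Injective S := by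
  refine (injective_iff_map_eq_zero S).2 fun g hg => ?_
  have hsq : HasSum (fun n : J => ‖inner 𝕜 (x n) g‖ ^ 2) 0 := by
    have hterm : ∀ n : J,
        RCLike.re (inner 𝕜 g (inner 𝕜 (x n) g • x n)) = ‖inner 𝕜 (x n) g‖ ^ 2 :=
      fun n => by rw [inner_smul_right, ← inner_conj_symm g (x n), RCLike.mul_conj]; norm_cast
    have := ((hS g).mapL (innerSL 𝕜 g)).mapL RCLike.reCLM
    simpa only [hg, map_zero, RCLike.reCLM_apply, innerSL_apply_apply, hterm] using this
  have hperp : ∀ n ∈ J, inner 𝕜 g (x n) = 0 := fun n hn => by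
    simpa [inner_eq_zero_symm] using
      congrFun ((hasSum_zero_iff_of_nonneg fun _ => by positivity).1 hsq) ⟨n, hn⟩
  have hspan : Submodule.span 𝕜 (x '' J) ≤ LinearMap.ker (innerSL 𝕜 g : V →ₗ[𝕜] 𝕜) :=
    Submodule.span_le.2 <| by rintro _ ⟨n, hn, rfl⟩; simpa using hperp n hn
  exact hx.eq_zero_of_inner_left 𝕜 fun v hv => hspan hv

end FrameOperator

theorem stmt6_general (x y : ℕ → H) (I : Set ℕ)
    (hy : IsCanonicalDualOn y x I) (k : ℕ)
    (hE : ((Finset.Icc 1 k : Finset ℕ) : Set ℕ) ⊂ I)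
    (hMRC : Dense ((Submodule.span ℂ
      (x '' (I \ (Finset.Icc 1 k : Finset ℕ))) : Submodule ℂ H) : Set H))
    (G : Matrix (Fin k) (Fin k) ℂ)
    (hG : ∀ m i : Fin k, G m i = (inner ℂ (x ((m : ℕ) + 1)) (y ((i : ℕ) + 1)) : ℂ))
    (α : ℕ → Fin k → ℂ)
    (hα : ∀ n : ℕ, α n = Matrix.mulVec (G - 1)⁻¹ (fun m : Fin k => (inner ℂ (x ((m : ℕ) + 1)) (y n) : ℂ))) :
    IsCanonicalDualOn (fun n => y n - ∑ i : Fin k, α n i • y ((i : ℕ) + 1)) x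
      (I \ (Finset.Icc 1 k : Finset ℕ)) := by
  obtain ⟨S, Sinv, hS, hSinvS, hSSinv, hyS⟩ := hy
  let φ : Fin k → H →L[ℂ] ℂ := fun m => innerSL ℂ (x ((m : ℕ) + 1))
  let w : Fin k → H := fun i => y ((i : ℕ) + 1)
  have hGφ : G = pairingMatrix φ w := Matrix.ext hG
  have hSw : S ∘ w = fun i : Fin k => x ((i : ℕ) + 1) := funext fun i => by
    have hi : (i : ℕ) + 1 ∈ I := hE.subset (by simp only [Finset.coe_Icc, Set.mem_Icc]; omega)
    simp [w, hyS _ hi, ← ContinuousLinearMap.comp_apply, hSSinv]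
  have hS' : IsFrameOperatorOn x (I \ ↑(Finset.Icc 1 k)) (S * (1 - finiteRankOp φ w)) := by
    have hT : finiteRankOp φ (fun i : Fin k => x ((i : ℕ) + 1))
        = ∑ n ∈ Finset.Icc 1 k, (innerSL ℂ (x n)).smulRight (x n) :=
      (Finset.sum_Icc_one_eq_sum_fin k fun n => (innerSL ℂ (x n)).smulRight (x n)).symm
    rw [mul_sub, mul_one, ContinuousLinearMap.mul_def, comp_finiteRankOp, hSw, hT]
    exact IsFrameOperatorOn.sdiff_finset hS hE.subset
  have hdet : IsUnit (G - 1).det := hGφ ▸ isUnit_det_pairingMatrix_sub_one φ w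
    (Function.Injective.of_comp (hS'.injective hMRC))
  let L := finiteRankOp (fun i => ∑ m, (G - 1)⁻¹ i m • φ m) w
  let U : (H →L[ℂ] H)ˣ := ⟨S, Sinv, hSSinv, hSinvS⟩ *
    ⟨1 - finiteRankOp φ w, 1 - L,
      one_sub_finiteRankOp_mul_one_sub_finiteRankOp φ w (hGφ ▸ Matrix.mul_nonsing_inv _ hdet),
      one_sub_finiteRankOp_mul_one_sub_finiteRankOp' φ w (hGφ ▸ Matrix.nonsing_inv_mul _ hdet)⟩
  refine ⟨U, ↑U⁻¹, hS', U.inv_mul, U.mul_inv, fun n hn => ?_⟩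
  change y n - ∑ i, α n i • w i = ((1 - L) * Sinv) (x n)
  rw [mul_apply_eq_comp, ← hyS n hn.1, sub_apply, one_apply_eq_self, finiteRankOp_apply,
    sum_smul_apply_eq_mulVec, hα]
  rfl

/-- For a frame `(x n)_{n ∈ I}` with canonical dual `(y n)` and `E = {1,…,k}` satisfying
the MRC: with `G` the `k×k` matrix `G_{m i} = ⟨y i, x m⟩`, the vectors
`v n = y n − Σ_{i=1}^k α_{n i} y i`, where `(α_{n 1},…,α_{n k})ᵀ = (G − I)⁻¹ (⟨y n, x 1⟩,…,⟨y n, x k⟩)ᵀ`,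
form the canonical dual frame of `(x n)_{n ∈ I \ E}`. -/
theorem stmt6 (x y : ℕ → H) (I : Set ℕ) (A B : ℝ) (hx : IsFrameOn x I A B)
    (hy : IsCanonicalDualOn y x I) (k : ℕ)
    (hE : ((Finset.Icc 1 k : Finset ℕ) : Set ℕ) ⊂ I)
    (hMRC : Dense ((Submodule.span ℂ
      (x '' (I \ (Finset.Icc 1 k : Finset ℕ))) : Submodule ℂ H) : Set H))
    (G : Matrix (Fin k) (Fin k) ℂ)
    (hG : ∀ m i : Fin k, G m i = (inner ℂ (x ((m : ℕ) + 1)) (y ((i : ℕ) + 1)) : ℂ))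
    (α : ℕ → Fin k → ℂ)
    (hα : ∀ n : ℕ, α n = Matrix.mulVec (G - 1)⁻¹ (fun m : Fin k => (inner ℂ (x ((m : ℕ) + 1)) (y n) : ℂ))) :
    IsCanonicalDualOn (fun n => y n - ∑ i : Fin k, α n i • y ((i : ℕ) + 1)) x
      (I \ (Finset.Icc 1 k : Finset ℕ)) :=
  stmt6_general x y I hy k hE hMRC G hG α hα
end
end

section
/- Let (x_n)_{n∈I} be a frame with canonical dual (y_n). If E = {1} satisfies the MRC for (x_n), then ⟨y_1, x_1⟩ ≠ 1; conversely, if ⟨y_1, x_1⟩ = 1, then x_1 is not in the closed span of {x_n : n ≥ 2}. -/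
/-!
Since `S y₁ = x₁`, pairing the frame expansion `S y₁ = ∑ₙ ⟨xₙ, y₁⟩ xₙ` with `y₁` gives
`∑ₙ |⟨xₙ, y₁⟩|² = ⟨y₁, x₁⟩`. If `⟨x₁, y₁⟩ = 1`, the term `n = 1` alone exhausts this sum, so
`y₁` is orthogonal to every `xₙ` with `n ≠ 1`, hence to their closed span; as `⟨x₁, y₁⟩ ≠ 0`,
that closed span cannot contain `x₁`, and in particular is not all of `H`.
-/

noncomputable section

variable {H : Type*} [NormedAddCommGroup H] [InnerProductSpace ℂ H] [CompleteSpace H]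

section FrameOperator

variable {𝕜 ι E : Type*} [RCLike 𝕜] [NormedAddCommGroup E] [InnerProductSpace 𝕜 E]

open RCLike

theorem hasSum_norm_inner_sq_of_hasSum_frameOperator (x : ι → E) {v w : E}
    (h : HasSum (fun i => (inner 𝕜 (x i) v : 𝕜) • x i) w) :
    HasSum (fun i => ‖(inner 𝕜 (x i) v : 𝕜)‖ ^ 2) (re (inner 𝕜 v w : 𝕜)) := by
  refine (reCLM.hasSum ((innerSL 𝕜 v).hasSum h)).congr_fun fun i => ?_
  simp only [innerSL_apply_apply, reCLM_apply, inner_smul_right,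
    ← inner_conj_symm v (x i), mul_conj, ← ofReal_pow, ofReal_re]

theorem inner_eq_zero_of_hasSum_frameOperator_eq_of_inner_eq_one (x : ι → E) {v : E}
    {i₀ : ι} (h : HasSum (fun i => (inner 𝕜 (x i) v : 𝕜) • x i) (x i₀))
    (hone : (inner 𝕜 (x i₀) v : 𝕜) = 1) {j : ι} (hj : j ≠ i₀) :
    (inner 𝕜 (x j) v : 𝕜) = 0 := by
  have hsum := hasSum_norm_inner_sq_of_hasSum_frameOperator x h
  rw [← inner_conj_symm, hone, map_one, one_re] at hsum
  by_contra hne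
  have hlt := lt_hasSum hsum i₀ (fun _ _ => sq_nonneg _) j hj (by positivity)
  simp [hone] at hlt

theorem inner_eq_zero_of_mem_closure_span {s : Set E} {v z : E}
    (hs : ∀ u ∈ s, (inner 𝕜 u v : 𝕜) = 0) (hz : z ∈ closure (Submodule.span 𝕜 s : Set E)) :
    (inner 𝕜 z v : 𝕜) = 0 := by
  have hspan : Submodule.span 𝕜 s ≤ (𝕜 ∙ v)ᗮ :=
    Submodule.span_le.mpr fun u hu => Submodule.mem_orthogonal_singleton_iff_inner_left.mpr
      (hs u hu)
  exact Submodule.mem_orthogonal_singleton_iff_inner_left.mp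
    (closure_minimal hspan (Submodule.isClosed_orthogonal _) hz)

end FrameOperator

theorem stmt8_general (x y : ℕ → H) (I : Set ℕ)
    (hy : IsCanonicalDualOn y x I) (h1 : (1 : ℕ) ∈ I) :
    (Dense ((Submodule.span ℂ (x '' (I \ {1})) : Submodule ℂ H) : Set H) →
      (inner ℂ (x 1) (y 1) : ℂ) ≠ 1) ∧
    ((inner ℂ (x 1) (y 1) : ℂ) = 1 →
      x 1 ∉ closure ((Submodule.span ℂ (x '' (I \ {1})) : Submodule ℂ H) : Set H)) := by
  obtain ⟨S, Sinv, hS, -, hSSinv, hyx⟩ := hy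
  have hSy : S (y 1) = x 1 := by
    rw [hyx 1 h1, ← ContinuousLinearMap.comp_apply, hSSinv, ContinuousLinearMap.id_apply]
  have hnotMem : (inner ℂ (x 1) (y 1) : ℂ) = 1 →
      x 1 ∉ closure ((Submodule.span ℂ (x '' (I \ {1})) : Submodule ℂ H) : Set H) := by
    intro hone hmem
    have horth : ∀ u ∈ x '' (I \ {1}), (inner ℂ u (y 1) : ℂ) = 0 := by
      rintro _ ⟨n, ⟨hnI, hn1⟩, rfl⟩
      exact inner_eq_zero_of_hasSum_frameOperator_eq_of_inner_eq_one (fun n : I => x n)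
        (i₀ := ⟨1, h1⟩) (hSy ▸ hS (y 1)) hone (j := ⟨n, hnI⟩) (by simpa using hn1)
    exact one_ne_zero (hone ▸ inner_eq_zero_of_mem_closure_span horth hmem)
  exact ⟨fun hdense hone => hnotMem hone (hdense.closure_eq ▸ Set.mem_univ _), hnotMem⟩

/-- If `E = {1}` satisfies the MRC for the frame `(x n)_{n ∈ I}` with canonical dual
`(y n)`, then `⟨y 1, x 1⟩ ≠ 1`; conversely, if `⟨y 1, x 1⟩ = 1`, then `x 1` does not lie
in the closed span of `{x n : n ∈ I, n ≥ 2}`. -/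
theorem stmt8 (x y : ℕ → H) (I : Set ℕ) (A B : ℝ) (hx : IsFrameOn x I A B)
    (hy : IsCanonicalDualOn y x I) (h1 : (1 : ℕ) ∈ I) :
    (Dense ((Submodule.span ℂ (x '' (I \ {1})) : Submodule ℂ H) : Set H) →
      (inner ℂ (x 1) (y 1) : ℂ) ≠ 1) ∧
    ((inner ℂ (x 1) (y 1) : ℂ) = 1 →
      x 1 ∉ closure ((Submodule.span ℂ (x '' (I \ {1})) : Submodule ℂ H) : Set H)) :=
  stmt8_general x y I hy h1

end
end

section
/- Let (x_n)_{n∈I} be a frame for H, (z_n)_{n∈I} an arbitrary dual frame of (x_n), E = {1,...,k} ⊊ I satisfying the MRC. Define v_n⁰ = z_n and iteratively, for j = 1,...,k: α_n^j = ⟨v_n^{j−1}, x_j⟩ / (1 − ⟨v_j^{j−1}, x_j⟩) and v_n^j = v_n^{j−1} + α_n^j v_j^{j−1} for n ∉ {1,...,j}. If all these sequences are well defined (i.e., ⟨v_j^{j−1}, x_j⟩ ≠ 1 for each j), then for every j from 1 to k, (v_n^j)_{n∉{1,...,j}} is a dual frame of (x_n)_{n∉{1,...,j}}. -/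
noncomputable section

variable {H : Type*} [NormedAddCommGroup H] [InnerProductSpace ℂ H] [CompleteSpace H]

/-- `(z n)_{n ∈ I}` is a dual frame of `(x n)_{n ∈ I}`. -/
def IsDualFrameOn (z x : ℕ → H) (I : Set ℕ) : Prop :=
  (∃ A B : ℝ, IsFrameOn z I A B) ∧
  ∀ h : H, HasSum (fun n : I => (inner ℂ (x n) h : ℂ) • z n) h

/-! Removing the index `m` from a dual pair `(x, w)` loses the term `⟪x m, h⟫ • w m` of the
reconstruction formula `h = ∑ ⟪x n, h⟫ • w n`. Pairing that formula with `x m` shows that the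
remaining coefficients give `∑_{n ≠ m} ⟪x n, h⟫ ⟪x m, w n⟫ = ⟪x m, h⟫ (1 - ⟪x m, w m⟫)`, so adding
`⟪x m, w n⟫ / (1 - ⟪x m, w m⟫) • w m` to every `w n` restores the lost term. The new sequence is a
rank-one perturbation of a Bessel sequence, hence Bessel, and a Bessel sequence that reconstructs
against the Bessel sequence `x` (bound `B`) automatically has lower frame bound `1 / B`. Removing
`1, …, k` one index at a time gives the theorem by induction. -/

open scoped InnerProductSpace

theorem HasSum.sdiff_singleton {α M : Type*} [AddCommGroup M] [TopologicalSpace M]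
    [IsTopologicalAddGroup M] {f : α → M} {S : Set α} {a : M} {m : α}
    (h : HasSum (fun n : S => f n) a) (hm : m ∈ S) :
    HasSum (fun n : ↥(S \ {m}) => f n) (a - f m) := by
  classical
  rw [← Function.comp_def, hasSum_subtype_iff_indicator] at h ⊢
  rw [Set.indicator_sdiff (Set.singleton_subset_iff.2 hm)]
  refine h.sub ?_
  convert hasSum_ite_eq m (f m) using 1
  ext n
  by_cases hn : n = m <;> simp [hn]

section Bessel

variable {ι 𝕜 E : Type*} [RCLike 𝕜] [NormedAddCommGroup E] [InnerProductSpace 𝕜 E]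

variable (𝕜) in
def IsBesselOn (x : ι → E) (S : Set ι) (B : ℝ) : Prop :=
  ∀ h : E, Summable (fun n : S => ‖⟪x n, h⟫_𝕜‖ ^ 2) ∧ ∑' n : S, ‖⟪x n, h⟫_𝕜‖ ^ 2 ≤ B * ‖h‖ ^ 2

theorem IsBesselOn.mono {x : ι → E} {S T : Set ι} {B : ℝ} (hx : IsBesselOn 𝕜 x T B)
    (hST : S ⊆ T) : IsBesselOn 𝕜 x S B := by
  intro h
  obtain ⟨hsum, hle⟩ := hx h
  have hsumS : Summable (fun n : S => ‖⟪x n, h⟫_𝕜‖ ^ 2) :=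
    hsum.comp_injective (i := Set.inclusion hST) (Set.inclusion_injective hST)
  refine ⟨hsumS, le_trans ?_ hle⟩
  exact hsumS.tsum_le_tsum_of_inj (g := fun n : T => ‖⟪x n, h⟫_𝕜‖ ^ 2) (Set.inclusion hST)
    (Set.inclusion_injective hST) (fun _ _ => sq_nonneg _) (fun _ => le_rfl) hsum

theorem IsBesselOn.add_smul {w : ι → E} {S : Set ι} {B : ℝ} (hw : IsBesselOn 𝕜 w S B)
    {c : ι → 𝕜} (hc : Summable (fun n : S => ‖c n‖ ^ 2)) (u : E) :
    IsBesselOn 𝕜 (fun n => w n + c n • u) S (2 * B + 2 * ‖u‖ ^ 2 * ∑' n : S, ‖c n‖ ^ 2) := by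
  intro h
  obtain ⟨hsum, hle⟩ := hw h
  have hpt : ∀ n : S, ‖⟪w n + c n • u, h⟫_𝕜‖ ^ 2 ≤
      2 * ‖⟪w n, h⟫_𝕜‖ ^ 2 + 2 * (‖u‖ ^ 2 * ‖h‖ ^ 2) * ‖c n‖ ^ 2 := by
    intro n
    have hnorm : ‖⟪w n + c n • u, h⟫_𝕜‖ ≤ ‖⟪w n, h⟫_𝕜‖ + ‖c n‖ * (‖u‖ * ‖h‖) := by
      rw [inner_add_left, inner_smul_left]
      refine (norm_add_le _ _).trans ?_
      rw [norm_mul, RCLike.norm_conj]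
      gcongr
      exact norm_inner_le_norm u h
    calc ‖⟪w n + c n • u, h⟫_𝕜‖ ^ 2 ≤ (‖⟪w n, h⟫_𝕜‖ + ‖c n‖ * (‖u‖ * ‖h‖)) ^ 2 := by gcongr
      _ ≤ _ := by nlinarith [sq_nonneg (‖⟪w n, h⟫_𝕜‖ - ‖c n‖ * (‖u‖ * ‖h‖))]
  have hmaj := (hsum.mul_left 2).add (hc.mul_left (2 * (‖u‖ ^ 2 * ‖h‖ ^ 2)))
  refine ⟨hmaj.of_nonneg_of_le (fun _ => sq_nonneg _) hpt, ?_⟩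
  calc ∑' n : S, ‖⟪w n + c n • u, h⟫_𝕜‖ ^ 2
      ≤ ∑' n : S, (2 * ‖⟪w n, h⟫_𝕜‖ ^ 2 + 2 * (‖u‖ ^ 2 * ‖h‖ ^ 2) * ‖c n‖ ^ 2) :=
        (hmaj.of_nonneg_of_le (fun _ => sq_nonneg _) hpt).tsum_le_tsum hpt hmaj
    _ = 2 * ∑' n : S, ‖⟪w n, h⟫_𝕜‖ ^ 2 + 2 * (‖u‖ ^ 2 * ‖h‖ ^ 2) * ∑' n : S, ‖c n‖ ^ 2 := by
        rw [(hsum.mul_left 2).tsum_add (hc.mul_left _), tsum_mul_left, tsum_mul_left]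
    _ ≤ _ := by linarith

theorem sq_norm_le_mul_tsum_of_hasSum {x w : ι → E} {S : Set ι} {B : ℝ}
    (hx : IsBesselOn 𝕜 x S B) (hB : 0 < B) {h : E}
    (hrec : HasSum (fun n : S => ⟪x n, h⟫_𝕜 • w n) h)
    (hw : Summable (fun n : S => ‖⟪w n, h⟫_𝕜‖ ^ 2)) :
    ‖h‖ ^ 2 ≤ B * ∑' n : S, ‖⟪w n, h⟫_𝕜‖ ^ 2 := by
  obtain ⟨hsum, hle⟩ := hx h
  have hinner : HasSum (fun n : S => ⟪x n, h⟫_𝕜 * ⟪h, w n⟫_𝕜) ⟪h, h⟫_𝕜 := by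
    simpa only [innerSL_apply_apply, inner_smul_right] using (innerSL 𝕜 h).hasSum hrec
  -- AM-GM with weights chosen so that the `x`-part contributes at most `‖h‖ ^ 2 / 2`
  have hpt : ∀ n : S, ‖⟪x n, h⟫_𝕜 * ⟪h, w n⟫_𝕜‖ ≤
      ‖⟪x n, h⟫_𝕜‖ ^ 2 / (2 * B) + B / 2 * ‖⟪w n, h⟫_𝕜‖ ^ 2 := by
    intro n
    rw [norm_mul, norm_inner_symm h]
    rw [div_add' _ _ _ (by positivity), le_div_iff₀ (by positivity)]
    nlinarith [sq_nonneg (‖⟪x n, h⟫_𝕜‖ - B * ‖⟪w n, h⟫_𝕜‖)]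
  have hbound := hinner.norm_le_of_bounded
    ((hsum.hasSum.div_const (2 * B)).add (hw.hasSum.mul_left (B / 2))) hpt
  rw [inner_self_eq_norm_sq_to_K, norm_pow, RCLike.norm_ofReal, abs_norm] at hbound
  have : (∑' n : S, ‖⟪x n, h⟫_𝕜‖ ^ 2) / (2 * B) ≤ ‖h‖ ^ 2 / 2 := by
    rw [div_le_iff₀ (by positivity)]
    nlinarith
  nlinarith

variable (𝕜) in
def dualUpdate (x w : ι → E) (m n : ι) : E :=
  w n + (⟪x m, w n⟫_𝕜 / (1 - ⟪x m, w m⟫_𝕜)) • w m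

theorem hasSum_inner_smul_dualUpdate {x w : ι → E} {S : Set ι} {m : ι} (hm : m ∈ S)
    (hc : ⟪x m, w m⟫_𝕜 ≠ 1) (hrec : ∀ h, HasSum (fun n : S => ⟪x n, h⟫_𝕜 • w n) h) (h : E) :
    HasSum (fun n : ↥(S \ {m}) => ⟪x n, h⟫_𝕜 • dualUpdate 𝕜 x w m n) h := by
  have hc' : 1 - ⟪x m, w m⟫_𝕜 ≠ 0 := sub_ne_zero.2 hc.symm
  have hcoef : HasSum (fun n : S => ⟪x n, h⟫_𝕜 * ⟪x m, w n⟫_𝕜) ⟪x m, h⟫_𝕜 := by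
    simpa only [innerSL_apply_apply, inner_smul_right] using (innerSL 𝕜 (x m)).hasSum (hrec h)
  have hw := (hrec h).sdiff_singleton (f := fun n => ⟪x n, h⟫_𝕜 • w n) hm
  have hcorr := ((hcoef.sdiff_singleton (f := fun n => ⟪x n, h⟫_𝕜 * ⟪x m, w n⟫_𝕜) hm).div_const
    (1 - ⟪x m, w m⟫_𝕜)).smul_const (w m)
  convert hw.add hcorr using 1
  · ext n
    simp only [dualUpdate, smul_add, smul_smul, mul_div_assoc]
  · rw [← mul_one_sub, mul_div_cancel_right₀ _ hc', sub_add_cancel]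

theorem IsBesselOn.dualUpdate {x w : ι → E} {S : Set ι} {B : ℝ} (hw : IsBesselOn 𝕜 w S B)
    (m : ι) : ∃ B', IsBesselOn 𝕜 (_root_.dualUpdate 𝕜 x w m) S B' := by
  set c := ⟪x m, w m⟫_𝕜
  have hcoef : Summable (fun n : S => ‖⟪x m, w n⟫_𝕜 / (1 - c)‖ ^ 2) := by
    refine ((hw (x m)).1.div_const (‖1 - c‖ ^ 2)).congr fun n => ?_
    rw [norm_div, div_pow, norm_inner_symm]
  exact ⟨_, hw.add_smul (c := fun n => ⟪x m, w n⟫_𝕜 / (1 - c)) hcoef (w m)⟩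

end Bessel

section Frame

variable {E : Type*} [NormedAddCommGroup E] [InnerProductSpace ℂ E]

theorem IsFrameOn.isBesselOn {x : ℕ → E} {I : Set ℕ} {A B : ℝ} (hx : IsFrameOn x I A B) :
    IsBesselOn ℂ x I B :=
  fun h => ⟨(hx.2.2 h).1, (hx.2.2 h).2.2⟩

theorem IsDualFrameOn.congr {w w' x : ℕ → E} {S : Set ℕ} (hw : IsDualFrameOn w x S)
    (heq : ∀ n ∈ S, w' n = w n) : IsDualFrameOn w' x S := by
  have heq' : ∀ n : S, w' n = w n := fun n => heq n n.2
  unfold IsDualFrameOn IsFrameOn at *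
  simpa only [heq'] using hw

theorem IsDualFrameOn.of_isBesselOn {x w : ℕ → E} {S : Set ℕ} {Bx Bw : ℝ}
    (hx : IsBesselOn ℂ x S Bx) (hBx : 0 < Bx) (hw : IsBesselOn ℂ w S Bw)
    (hrec : ∀ h, HasSum (fun n : S => ⟪x n, h⟫_ℂ • w n) h) : IsDualFrameOn w x S := by
  refine ⟨⟨Bx⁻¹, max Bw 1, inv_pos.2 hBx, by positivity, fun h => ⟨(hw h).1, ?_, ?_⟩⟩, hrec⟩
  · rw [inv_mul_le_iff₀ hBx]
    exact sq_norm_le_mul_tsum_of_hasSum hx hBx (hrec h) (hw h).1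
  · exact (hw h).2.trans (mul_le_mul_of_nonneg_right (le_max_left _ _) (sq_nonneg _))

theorem IsDualFrameOn.dualUpdate {x w : ℕ → E} {S : Set ℕ} {B : ℝ} (hx : IsBesselOn ℂ x S B)
    (hB : 0 < B) (hw : IsDualFrameOn w x S) {m : ℕ} (hm : m ∈ S) (hc : ⟪x m, w m⟫_ℂ ≠ 1) :
    IsDualFrameOn (_root_.dualUpdate ℂ x w m) x (S \ {m}) := by
  obtain ⟨⟨_, _, hwf⟩, hrec⟩ := hw
  obtain ⟨B', hB'⟩ := hwf.isBesselOn.dualUpdate (x := x) m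
  exact IsDualFrameOn.of_isBesselOn (hx.mono Set.sdiff_subset) hB (hB'.mono Set.sdiff_subset)
    (hasSum_inner_smul_dualUpdate hm hc hrec)

end Frame

theorem sdiff_Icc_one_succ (I : Set ℕ) (j : ℕ) :
    I \ ((Finset.Icc 1 (j + 1) : Finset ℕ) : Set ℕ) =
      (I \ ((Finset.Icc 1 j : Finset ℕ) : Set ℕ)) \ {j + 1} := by
  rw [Set.sdiff_sdiff]
  congr 1
  ext n
  simp only [Finset.coe_Icc, Set.mem_union, Set.mem_Icc, Set.mem_singleton_iff]
  omega

theorem stmt9_general (x z : ℕ → H) (I : Set ℕ) (A B : ℝ) (hx : IsFrameOn x I A B)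
    (hz : IsDualFrameOn z x I) (k : ℕ)
    (hE : ((Finset.Icc 1 k : Finset ℕ) : Set ℕ) ⊂ I)
    (v : ℕ → ℕ → H) (hv0 : ∀ n, v 0 n = z n)
    (hden : ∀ j ∈ Finset.Icc 1 k, (inner ℂ (x j) (v (j - 1) j) : ℂ) ≠ 1)
    (hrec : ∀ j ∈ Finset.Icc 1 k, ∀ n ∈ I \ ((Finset.Icc 1 j : Finset ℕ) : Set ℕ),
      v j n = v (j - 1) n +
        ((inner ℂ (x j) (v (j - 1) n) : ℂ) / (1 - (inner ℂ (x j) (v (j - 1) j) : ℂ))) •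
          v (j - 1) j) :
    ∀ j ∈ Finset.Icc 1 k,
      IsDualFrameOn (v j) x (I \ ((Finset.Icc 1 j : Finset ℕ) : Set ℕ)) := by
  have hdual : ∀ j ≤ k, IsDualFrameOn (v j) x (I \ ((Finset.Icc 1 j : Finset ℕ) : Set ℕ)) := by
    intro j
    induction j with
    | zero => intro _; simpa [funext hv0] using hz
    | succ j ih =>
      intro hjk
      have hj : j + 1 ∈ Finset.Icc 1 k := Finset.mem_Icc.2 ⟨by omega, hjk⟩
      have hmem : j + 1 ∈ I \ ((Finset.Icc 1 j : Finset ℕ) : Set ℕ) := ⟨hE.1 hj, by simp⟩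
      rw [sdiff_Icc_one_succ]
      refine ((ih (by omega)).dualUpdate (hx.isBesselOn.mono Set.sdiff_subset) hx.2.1 hmem
        (by simpa using hden _ hj)).congr fun n hn => ?_
      simpa [dualUpdate] using hrec _ hj n (by rwa [sdiff_Icc_one_succ])
  exact fun j hj => hdual j (Finset.mem_Icc.1 hj).2

/-- Iterative construction: `v 0 n = z n`, and
`v j n = v (j-1) n + (⟨v (j-1) n, x j⟩ / (1 − ⟨v (j-1) j, x j⟩)) v (j-1) j` for
`n ∉ {1,…,j}`.  If all denominators are nonzero (`⟨v (j-1) j, x j⟩ ≠ 1`), then for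
every `j = 1,…,k`, `(v j n)_{n ∈ I \ {1,…,j}}` is a dual frame of `(x n)_{n ∈ I \ {1,…,j}}`. -/
theorem stmt9 (x z : ℕ → H) (I : Set ℕ) (A B : ℝ) (hx : IsFrameOn x I A B)
    (hz : IsDualFrameOn z x I) (k : ℕ)
    (hE : ((Finset.Icc 1 k : Finset ℕ) : Set ℕ) ⊂ I)
    (hMRC : Dense ((Submodule.span ℂ
      (x '' (I \ (Finset.Icc 1 k : Finset ℕ))) : Submodule ℂ H) : Set H))
    (v : ℕ → ℕ → H) (hv0 : ∀ n, v 0 n = z n)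
    (hden : ∀ j ∈ Finset.Icc 1 k, (inner ℂ (x j) (v (j - 1) j) : ℂ) ≠ 1)
    (hrec : ∀ j ∈ Finset.Icc 1 k, ∀ n ∈ I \ ((Finset.Icc 1 j : Finset ℕ) : Set ℕ),
      v j n = v (j - 1) n +
        ((inner ℂ (x j) (v (j - 1) n) : ℂ) / (1 - (inner ℂ (x j) (v (j - 1) j) : ℂ))) •
          v (j - 1) j) :
    ∀ j ∈ Finset.Icc 1 k,
      IsDualFrameOn (v j) x (I \ ((Finset.Icc 1 j : Finset ℕ) : Set ℕ)) :=
  stmt9_general x z I A B hx hz k hE v hv0 hden hrec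

end
end

section
/- Let (e_n)_{n∈ℕ} be an orthonormal basis of H, X = (e_1, e_1, e_1, e_2, e_3, ...) and Z = (e_1, −(1/2)e_1, (1/2)e_1, e_2, e_3, ...). Then for E = {1}, the 1×1 matrix A_{X,Z,E} = [⟨z_1, x_1⟩ − 1] is the zero matrix, hence not invertible, even though E satisfies the MRC for X. -/
noncomputable section

variable {H : Type*} [NormedAddCommGroup H] [InnerProductSpace ℂ H] [CompleteSpace H]

theorem HilbertBasis.dense_span_of_range_subset {ι 𝕜 E : Type*} [RCLike 𝕜]
    [NormedAddCommGroup E] [InnerProductSpace 𝕜 E] (b : HilbertBasis ι 𝕜 E) {s : Set E}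
    (hs : Set.range b ⊆ s) : Dense (Submodule.span 𝕜 s : Set E) :=
  (Submodule.dense_iff_topologicalClosure_eq_top.mpr b.dense_span).mono
    (Submodule.span_mono hs)

theorem stmt14_general (e : HilbertBasis ℕ ℂ H) (x z : ℕ → H)
    (hx0 : x 0 = e 0) (hx1 : x 1 = e 0)
    (hx : ∀ n, 3 ≤ n → x n = e (n - 2))
    (hz0 : z 0 = e 0) :
    (Matrix.of (fun _ _ : Fin 1 => (inner ℂ (x 0) (z 0) : ℂ) - 1)) = 0 ∧
    ¬IsUnit (Matrix.of (fun _ _ : Fin 1 => (inner ℂ (x 0) (z 0) : ℂ) - 1)) ∧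
    Dense ((Submodule.span ℂ (x '' (Set.univ \ {0})) : Submodule ℂ H) : Set H) := by
  have hA : Matrix.of (fun _ _ : Fin 1 => (inner ℂ (x 0) (z 0) : ℂ) - 1) = 0 := by
    ext
    simp [hx0, hz0, e.orthonormal.1]
  refine ⟨hA, hA ▸ not_isUnit_zero, e.dense_span_of_range_subset ?_⟩
  rintro _ ⟨_ | m, rfl⟩
  · exact ⟨1, by simp, hx1⟩
  · exact ⟨m + 3, by simp, hx (m + 3) (by omega)⟩

/-- Example: with `(e n)` an orthonormal basis (indexed from `0`),
`X = (e 0, e 0, e 0, e 1, e 2, …)`, `Z = (e 0, −½ e 0, ½ e 0, e 1, e 2, …)`, and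
`E = {0}` (the first index), the `1×1` matrix `A_{X,Z,E} = [⟨z 0, x 0⟩ − 1]` is the
zero matrix, hence not invertible, even though `E` satisfies the MRC for `X`. -/
theorem stmt14 (e : HilbertBasis ℕ ℂ H) (x z : ℕ → H)
    (hx0 : x 0 = e 0) (hx1 : x 1 = e 0) (hx2 : x 2 = e 0)
    (hx : ∀ n, 3 ≤ n → x n = e (n - 2))
    (hz0 : z 0 = e 0) (hz1 : z 1 = -((1 : ℂ) / 2) • e 0) (hz2 : z 2 = ((1 : ℂ) / 2) • e 0)
    (hz : ∀ n, 3 ≤ n → z n = e (n - 2)) :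
    (Matrix.of (fun _ _ : Fin 1 => (inner ℂ (x 0) (z 0) : ℂ) - 1)) = 0 ∧
    ¬IsUnit (Matrix.of (fun _ _ : Fin 1 => (inner ℂ (x 0) (z 0) : ℂ) - 1)) ∧
    Dense ((Submodule.span ℂ (x '' (Set.univ \ {0})) : Submodule ℂ H) : Set H) :=
  stmt14_general e x z hx0 hx1 hx hz0

end
end
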